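/- arXiv:1207.4433 — 3 statements merged into one kernel-verified Lean document; each statement's English description precedes it below -/
import Mathlib

section
/- (Strong duality via compactness.) Let f : X → P(Z) with f(x) ∈ G(Z,C) for all x and g : X → P(Y) with g(x) ∈ G(Y,D) for all x be closed set-valued maps (their graphs are closed). Assume there exist z*₀ ∈ C+ and y*₀ ∈ D+ such that for every r ∈ ℝ the sublevel set {x ∈ X : φ_{f,z*₀}(x) + φ_{g,y*₀}(x) ≤ r} is compact. Then the value function v(y) = cl(⋃{f(x) : x ∈ X, y ∈ g(x)}) is closed (its graph is closed). If, additionally, f and g are convex (their graphs are convex) and there exists x ∈ X with 0 ∈ g(x) and f(x) ≠ ∅, then strong duality holds: v(0) = p = d. -/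
open Set Pointwise Topology Filter

noncomputable section

variable {X Y Z : Type*}
  [AddCommGroup X] [Module ℝ X] [TopologicalSpace X] [IsTopologicalAddGroup X]
  [ContinuousSMul ℝ X] [LocallyConvexSpace ℝ X]
  [AddCommGroup Y] [Module ℝ Y] [TopologicalSpace Y] [IsTopologicalAddGroup Y]
  [ContinuousSMul ℝ Y] [LocallyConvexSpace ℝ Y]
  [AddCommGroup Z] [Module ℝ Z] [TopologicalSpace Z] [IsTopologicalAddGroup Z]
  [ContinuousSMul ℝ Z] [LocallyConvexSpace ℝ Z]

/-- The positive dual cone `C⁺`. -/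
def posDual (C : Set Z) : Set (Z →L[ℝ] ℝ) := {z' | ∀ z ∈ C, 0 ≤ z' z}

/-- The halfspace `S(z*) = {z | 0 ≤ z*(z)}`. -/
def SPos (z' : Z →L[ℝ] ℝ) : Set Z := {z | 0 ≤ z' z}

/-- `S_{(y*,z*)}(y) = {z | y*(y) ≤ z*(z)}`. -/
def SMap (y' : Y →L[ℝ] ℝ) (z' : Z →L[ℝ] ℝ) (y : Y) : Set Z := {z | y' y ≤ z' z}

/-- Scalarization: `inf {z*(z) | z ∈ A}` in `EReal` (inf ∅ = +∞). -/
def scal (z' : Z →L[ℝ] ℝ) (A : Set Z) : EReal := ⨅ z ∈ A, (z' z : EReal)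

open Classical in
/-- Addition on `EReal` with the convention `(+∞) + (−∞) = (−∞) + (+∞) = +∞`. -/
def eadd (a b : EReal) : EReal := if a = ⊤ ∨ b = ⊤ then ⊤ else a + b

/-- The set-valued Lagrangian `l(x,y*,z*) = f(x) ⊕ cl ⋃_{y ∈ g(x)} S_{(y*,z*)}(y)`. -/
def lag (f : X → Set Z) (g : X → Set Y) (x : X) (y' : Y →L[ℝ] ℝ) (z' : Z →L[ℝ] ℝ) :
    Set Z :=
  closure (f x + closure (⋃ y ∈ g x, SMap y' z' y))

/-- The dual objective `h(y*,z*) = cl ⋃_x l(x,y*,z*)`. -/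
def dualObj (f : X → Set Z) (g : X → Set Y) (y' : Y →L[ℝ] ℝ) (z' : Z →L[ℝ] ℝ) : Set Z :=
  closure (⋃ x, lag f g x y' z')

/-- The value function `v(y) = cl ⋃ {f(x) | y ∈ g(x)}`. -/
def valFn (f : X → Set Z) (g : X → Set Y) (y : Y) : Set Z :=
  closure (⋃ x ∈ {x | y ∈ g x}, f x)

/-!
The set `B = {(y, z) | ∃ x, y ∈ g x ∧ z ∈ f x}` is the projection of the closed joint graph of
`f` and `g`. Near any `(y, z)` the `x`'s that reach `B` stay in a sublevel set of
`φ_{f,z₀} + φ_{g,y₀}`, which is compact, so `B` is closed; hence `v(y)` is the `y`-slice of `B`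
and the graph of `v` is `B`. For convex `f`, `g` the set `B` is also convex, and a point
`z ∉ v(0)` is separated from `B` by a functional `(y, z) ↦ y*(y) + z*(z)`. As `f(x) + C ⊆ f(x)`
for a feasible `x`, `z*` is bounded below on a translate of the cone `C`, so `z* ∈ C⁺ \ {0}`,
and the separating inequality passes to every Lagrangian, so `z ∉ h(y*, z*)`. The reverse
inclusion is weak duality: `0 ∈ S_{(y*,z*)}(0)`.
-/

theorem isClosed_image_snd_inter_prod_univ {α β : Type*} [TopologicalSpace α]
    [TopologicalSpace β] {A : Set (α × β)} (hA : IsClosed A) {K : Set α} (hK : IsCompact K) :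
    IsClosed (Prod.snd '' (A ∩ K ×ˢ univ)) := by
  rw [← isOpen_compl_iff, isOpen_iff_mem_nhds]
  intro b hb
  have hKb : K ×ˢ {b} ⊆ Aᶜ := by
    rintro ⟨a, b'⟩ ⟨ha, rfl⟩ hab
    exact hb ⟨(a, b'), ⟨hab, ha, mem_univ _⟩, rfl⟩
  obtain ⟨U, V, -, hV, hKU, hbV, hUV⟩ :=
    generalized_tube_lemma hK isCompact_singleton hA.isOpen_compl hKb
  refine mem_of_superset (hV.mem_nhds (hbV rfl)) ?_
  rintro b' hb' ⟨⟨a, _⟩, ⟨hA', ha, -⟩, rfl⟩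
  exact hUV ⟨hKU ha, hb'⟩ hA'

theorem isClosed_image_snd_of_locally_isCompact {α β : Type*} [TopologicalSpace α]
    [TopologicalSpace β] {A : Set (α × β)} (hA : IsClosed A)
    (hloc : ∀ b, ∃ U, IsOpen U ∧ b ∈ U ∧ ∃ K, IsCompact K ∧ ∀ p ∈ A, p.2 ∈ U → p.1 ∈ K) :
    IsClosed (Prod.snd '' A) := by
  refine closure_subset_iff_isClosed.1 fun b hb => ?_
  obtain ⟨U, hU, hbU, K, hK, hAK⟩ := hloc b
  have hlocal : U ∩ Prod.snd '' A ⊆ Prod.snd '' (A ∩ K ×ˢ univ) := by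
    rintro _ ⟨hpU, p, hpA, rfl⟩
    exact ⟨p, ⟨hpA, hAK p hpA hpU, mem_univ _⟩, rfl⟩
  have hb' := closure_minimal hlocal (isClosed_image_snd_inter_prod_univ hA hK)
    (hU.inter_closure ⟨hbU, hb⟩)
  exact image_mono inter_subset_left hb'

theorem add_mem_of_eq_closure_convexHull {E : Type*} [AddCommGroup E] [Module ℝ E]
    [TopologicalSpace E] {A C : Set E} (hA : A = closure (convexHull ℝ (A + C))) {z c : E}
    (hz : z ∈ A) (hc : c ∈ C) : z + c ∈ A := by
  rw [hA]
  exact subset_closure (subset_convexHull ℝ _ (add_mem_add hz hc))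

theorem mem_posDual_of_lt {E : Type*} [AddCommGroup E] [Module ℝ E] [TopologicalSpace E]
    {C S : Set E} (hC : ∀ t : ℝ, 0 < t → ∀ z ∈ C, t • z ∈ C)
    (hSC : ∀ z ∈ S, ∀ c ∈ C, z + c ∈ S) {e : E →L[ℝ] ℝ} {u : ℝ} {z : E} (hz : z ∈ S)
    (hu : ∀ w ∈ S, u < e w) : e ∈ posDual C := by
  intro c hc
  by_contra! hneg
  -- moving `z` by this multiple of `c` lands exactly on the level `u`
  set t : ℝ := (e z - u) / -e c
  have ht : 0 < t := div_pos (by linarith [hu z hz]) (by linarith)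
  have htc : t * e c = u - e z := by
    simp only [t]
    field_simp [hneg.ne]
    ring
  have := hu _ (hSC z hz _ (hC t ht c hc))
  rw [map_add, map_smul, smul_eq_mul, htc] at this
  linarith

theorem scal_le {E : Type*} [AddCommGroup E] [Module ℝ E] [TopologicalSpace E]
    (e : E →L[ℝ] ℝ) {A : Set E} {z : E} (hz : z ∈ A) : scal e A ≤ e z :=
  iInf₂_le z hz

theorem eadd_scal_le {E F : Type*} [AddCommGroup E] [Module ℝ E] [TopologicalSpace E]
    [AddCommGroup F] [Module ℝ F] [TopologicalSpace F] (e : E →L[ℝ] ℝ) (e' : F →L[ℝ] ℝ)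
    {A : Set E} {B : Set F} {z : E} {y : F} (hz : z ∈ A) (hy : y ∈ B) :
    eadd (scal e A) (scal e' B) ≤ ((e z + e' y : ℝ) : EReal) := by
  have hA := scal_le e hz
  have hB := scal_le e' hy
  rw [eadd, if_neg (not_or.2 ⟨ne_top_of_le_ne_top (EReal.coe_ne_top _) hA,
    ne_top_of_le_ne_top (EReal.coe_ne_top _) hB⟩), EReal.coe_add]
  exact add_le_add hA hB

def jointGraph {X Y Z : Type*} (f : X → Set Z) (g : X → Set Y) : Set (X × (Y × Z)) :=
  {p | p.2.1 ∈ g p.1 ∧ p.2.2 ∈ f p.1}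

theorem isClosed_jointGraph {X Y Z : Type*} [TopologicalSpace X] [TopologicalSpace Y]
    [TopologicalSpace Z] {f : X → Set Z} {g : X → Set Y}
    (hf : IsClosed {q : X × Z | q.2 ∈ f q.1}) (hg : IsClosed {q : X × Y | q.2 ∈ g q.1}) :
    IsClosed (jointGraph f g) :=
  (hg.preimage (continuous_fst.prodMk (continuous_fst.comp continuous_snd))).inter
    (hf.preimage (continuous_fst.prodMk (continuous_snd.comp continuous_snd)))

theorem convex_jointGraph {X Y Z : Type*} [AddCommGroup X] [Module ℝ X] [AddCommGroup Y]
    [Module ℝ Y] [AddCommGroup Z] [Module ℝ Z] {f : X → Set Z} {g : X → Set Y}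
    (hf : Convex ℝ {q : X × Z | q.2 ∈ f q.1}) (hg : Convex ℝ {q : X × Y | q.2 ∈ g q.1}) :
    Convex ℝ (jointGraph f g) := by
  rintro p ⟨hpg, hpf⟩ q ⟨hqg, hqf⟩ a b ha hb hab
  exact ⟨hg (x := (p.1, p.2.1)) (y := (q.1, q.2.1)) hpg hqg ha hb hab,
    hf (x := (p.1, p.2.2)) (y := (q.1, q.2.2)) hpf hqf ha hb hab⟩

theorem isClosed_image_snd_jointGraph {X Y Z : Type*} [TopologicalSpace X] [AddCommGroup Y]
    [Module ℝ Y] [TopologicalSpace Y] [AddCommGroup Z] [Module ℝ Z] [TopologicalSpace Z]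
    {f : X → Set Z} {g : X → Set Y}
    (hf : IsClosed {q : X × Z | q.2 ∈ f q.1}) (hg : IsClosed {q : X × Y | q.2 ∈ g q.1})
    (z₀ : Z →L[ℝ] ℝ) (y₀ : Y →L[ℝ] ℝ)
    (hK : ∀ r : ℝ, IsCompact {x : X | eadd (scal z₀ (f x)) (scal y₀ (g x)) ≤ (r : EReal)}) :
    IsClosed (Prod.snd '' jointGraph f g) := by
  refine isClosed_image_snd_of_locally_isCompact (isClosed_jointGraph hf hg) fun q => ?_
  set r := z₀ q.2 + y₀ q.1 + 1
  refine ⟨{p | z₀ p.2 + y₀ p.1 < r}, isOpen_lt (by fun_prop) continuous_const,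
    by simp only [mem_setOf_eq, r]; linarith, _, hK r, ?_⟩
  rintro ⟨x, y, z⟩ ⟨hy, hz⟩ hr
  exact (eadd_scal_le z₀ y₀ hz hy).trans (EReal.coe_le_coe_iff.2 hr.le)

theorem valFn_eq_slice {X Y Z : Type*} [TopologicalSpace Y] [TopologicalSpace Z]
    {f : X → Set Z} {g : X → Set Y} (hB : IsClosed (Prod.snd '' jointGraph f g)) (y : Y) :
    valFn f g y = {z | (y, z) ∈ Prod.snd '' jointGraph f g} := by
  have hunion : (⋃ x ∈ {x | y ∈ g x}, f x) = {z | (y, z) ∈ Prod.snd '' jointGraph f g} := by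
    ext z
    simp [jointGraph]
  have hslice : IsClosed {z | (y, z) ∈ Prod.snd '' jointGraph f g} :=
    hB.preimage (Continuous.prodMk continuous_const continuous_id)
  rw [valFn, hunion, hslice.closure_eq]

theorem graph_valFn_eq {X Y Z : Type*} [TopologicalSpace Y] [TopologicalSpace Z]
    {f : X → Set Z} {g : X → Set Y} (hB : IsClosed (Prod.snd '' jointGraph f g)) :
    {q : Y × Z | q.2 ∈ valFn f g q.1} = Prod.snd '' jointGraph f g := by
  ext q
  rw [mem_setOf_eq, valFn_eq_slice hB, mem_setOf_eq]

section Duality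

variable {X Y Z : Type*} [AddCommGroup Y] [Module ℝ Y] [TopologicalSpace Y]
  [AddCommGroup Z] [Module ℝ Z] [TopologicalSpace Z] {f : X → Set Z} {g : X → Set Y}

theorem valFn_zero_subset_dualObj (y' : Y →L[ℝ] ℝ) (z' : Z →L[ℝ] ℝ) :
    valFn f g 0 ⊆ dualObj f g y' z' := by
  refine closure_mono (iUnion₂_subset fun x h0 => ?_)
  have h0S : (0 : Z) ∈ closure (⋃ y ∈ g x, SMap y' z' y) :=
    subset_closure (mem_biUnion h0 (by simp [SMap]))
  intro z hz
  exact mem_iUnion_of_mem x (subset_closure (by simpa using add_mem_add hz h0S))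

theorem dualObj_subset_of_lt {y' : Y →L[ℝ] ℝ} {z' : Z →L[ℝ] ℝ} {u : ℝ}
    (hsep : ∀ x, ∀ y ∈ g x, ∀ z ∈ f x, u < y' y + z' z) :
    dualObj f g y' z' ⊆ {w | u ≤ z' w} := by
  have hclosed : ∀ a : ℝ, IsClosed {w : Z | a ≤ z' w} := fun a =>
    isClosed_le continuous_const z'.continuous
  refine closure_minimal (iUnion_subset fun x => closure_minimal ?_ (hclosed u)) (hclosed u)
  rintro _ ⟨zf, hzf, s, hs, rfl⟩
  have hsS : (⋃ y ∈ g x, SMap y' z' y) ⊆ {w | u - z' zf ≤ z' w} := by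
    simp only [iUnion_subset_iff]
    intro y hy w (hw : y' y ≤ z' w)
    show u - z' zf ≤ z' w
    linarith [hsep x y hy zf hzf]
  have := closure_minimal hsS (hclosed _) hs
  simp only [mem_setOf_eq, map_add] at this ⊢
  linarith

theorem apply_eq_comp_inl_add_comp_inr (Φ : Y × Z →L[ℝ] ℝ) (p : Y × Z) :
    Φ p = Φ.comp (.inl ℝ Y Z) p.1 + Φ.comp (.inr ℝ Y Z) p.2 := by
  simp [← map_add]

theorem iInter_dualObj_subset_valFn_zero [IsTopologicalAddGroup Y] [ContinuousSMul ℝ Y]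
    [LocallyConvexSpace ℝ Y] [IsTopologicalAddGroup Z] [ContinuousSMul ℝ Z]
    [LocallyConvexSpace ℝ Z] {C : Set Z} (hC : ∀ t : ℝ, 0 < t → ∀ z ∈ C, t • z ∈ C)
    (hfC : ∀ x, ∀ z ∈ f x, ∀ c ∈ C, z + c ∈ f x)
    (hBclosed : IsClosed (Prod.snd '' jointGraph f g))
    (hBconv : Convex ℝ (Prod.snd '' jointGraph f g)) {x₁ : X} (hx₁ : (0 : Y) ∈ g x₁)
    {z₁ : Z} (hz₁ : z₁ ∈ f x₁) :
    ⋂ (y' : Y →L[ℝ] ℝ), ⋂ z' ∈ posDual C \ {0}, dualObj f g y' z' ⊆ valFn f g 0 := by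
  intro w hw
  rw [valFn_eq_slice hBclosed, mem_setOf_eq]
  by_contra hw'
  obtain ⟨Φ, u, hΦw, hΦB⟩ := geometric_hahn_banach_point_closed hBconv hBclosed hw'
  set y' := Φ.comp (.inl ℝ Y Z)
  set z' := Φ.comp (.inr ℝ Y Z)
  have hsep : ∀ x, ∀ y ∈ g x, ∀ z ∈ f x, u < y' y + z' z := fun x y hy z hz => by
    have := hΦB (y, z) ⟨(x, y, z), ⟨hy, hz⟩, rfl⟩
    rwa [apply_eq_comp_inl_add_comp_inr] at this
  have hsep₁ : ∀ z ∈ f x₁, u < z' z := fun z hz => by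
    simpa using hsep x₁ 0 hx₁ z hz
  have hzw : z' w < u := by
    rwa [apply_eq_comp_inl_add_comp_inr, map_zero, zero_add] at hΦw
  have hz' : z' ∈ posDual C \ {0} := by
    refine ⟨mem_posDual_of_lt hC (hfC x₁) hz₁ hsep₁, fun h0 => ?_⟩
    have := hsep₁ z₁ hz₁
    simp only [mem_singleton_iff.1 h0, zero_apply] at this hzw
    linarith
  have := dualObj_subset_of_lt hsep (mem_iInter₂.1 (mem_iInter.1 hw y') z' hz')
  exact absurd this (not_le.2 hzw)

end Duality

theorem strong_duality_via_compactness_general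
    (C : Set Z) (hCcone : ∀ t : ℝ, 0 < t → ∀ z ∈ C, t • z ∈ C)
    (D : Set Y)
    (f : X → Set Z) (g : X → Set Y)
    (hfG : ∀ x, f x = closure (convexHull ℝ (f x + C)))
    (hfclosed : IsClosed {q : X × Z | q.2 ∈ f q.1})
    (hgclosed : IsClosed {q : X × Y | q.2 ∈ g q.1})
    (hcompact : ∃ z0 ∈ posDual C, ∃ y0 ∈ posDual D,
        ∀ r : ℝ, IsCompact {x : X | eadd (scal z0 (f x)) (scal y0 (g x)) ≤ (r : EReal)}) :
    IsClosed {q : Y × Z | q.2 ∈ valFn f g q.1} ∧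
    ((Convex ℝ {q : X × Z | q.2 ∈ f q.1} ∧ Convex ℝ {q : X × Y | q.2 ∈ g q.1} ∧
        ∃ x : X, (0 : Y) ∈ g x ∧ (f x).Nonempty) →
      valFn f g 0 = ⋂ (y' : Y →L[ℝ] ℝ), ⋂ z' ∈ posDual C \ {0}, dualObj f g y' z') := by
  obtain ⟨z₀, -, y₀, -, hK⟩ := hcompact
  have hBclosed := isClosed_image_snd_jointGraph hfclosed hgclosed z₀ y₀ hK
  refine ⟨graph_valFn_eq hBclosed ▸ hBclosed, ?_⟩
  rintro ⟨hfconv, hgconv, x₁, hx₁, z₁, hz₁⟩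
  have hBconv := (convex_jointGraph hfconv hgconv).linear_image (LinearMap.snd ℝ X (Y × Z))
  have hfC : ∀ x, ∀ z ∈ f x, ∀ c ∈ C, z + c ∈ f x := fun x _ hz _ hc =>
    add_mem_of_eq_closure_convexHull (hfG x) hz hc
  refine subset_antisymm ?_ (iInter_dualObj_subset_valFn_zero hCcone hfC hBclosed hBconv hx₁ hz₁)
  exact subset_iInter fun y' => subset_iInter₂ fun z' _ => valFn_zero_subset_dualObj y' z'

/-- **Strong duality via compactness.** Let `f` and `g` be closed set-valued maps (closed
graphs) with values in `G(Z,C)` and `G(Y,D)` respectively. If there are `z*₀ ∈ C⁺` and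
`y*₀ ∈ D⁺` such that all sublevel sets `{x | φ_{f,z*₀}(x) + φ_{g,y*₀}(x) ≤ r}` (`r ∈ ℝ`) are
compact, then the value function `v` is closed (its graph is closed); if, additionally, `f`
and `g` are convex (convex graphs) and some `x` satisfies `0 ∈ g(x)` and `f(x) ≠ ∅`, then
strong duality holds: `v(0) = p = d`. -/
theorem strong_duality_via_compactness
    (C : Set Z) (hCconv : Convex ℝ C) (hCcone : ∀ t : ℝ, 0 < t → ∀ z ∈ C, t • z ∈ C)
    (hC0 : (0 : Z) ∈ C)
    (D : Set Y) (hDconv : Convex ℝ D) (hDcone : ∀ t : ℝ, 0 < t → ∀ y ∈ D, t • y ∈ D)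
    (hD0 : (0 : Y) ∈ D)
    (f : X → Set Z) (g : X → Set Y)
    (hfG : ∀ x, f x = closure (convexHull ℝ (f x + C)))
    (hgG : ∀ x, g x = closure (convexHull ℝ (g x + D)))
    (hfclosed : IsClosed {q : X × Z | q.2 ∈ f q.1})
    (hgclosed : IsClosed {q : X × Y | q.2 ∈ g q.1})
    (hcompact : ∃ z0 ∈ posDual C, ∃ y0 ∈ posDual D,
        ∀ r : ℝ, IsCompact {x : X | eadd (scal z0 (f x)) (scal y0 (g x)) ≤ (r : EReal)}) :
    IsClosed {q : Y × Z | q.2 ∈ valFn f g q.1} ∧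
    ((Convex ℝ {q : X × Z | q.2 ∈ f q.1} ∧ Convex ℝ {q : X × Y | q.2 ∈ g q.1} ∧
        ∃ x : X, (0 : Y) ∈ g x ∧ (f x).Nonempty) →
      valFn f g 0 = ⋂ (y' : Y →L[ℝ] ℝ), ⋂ z' ∈ posDual C \ {0}, dualObj f g y' z') :=
  strong_duality_via_compactness_general C hCcone D f g hfG hfclosed hgclosed hcompact
end
end

section
/- Let (L, ≤) be a complete lattice, X and V nonempty sets, and l : X × V → L. For subsets X̄ ⊆ X and V̄ ⊆ V, the following are equivalent: (i) for all U ⊆ X and all W ⊆ V: Ľ(X̄,W) ≤ Ľ(X̄,V̄), Ľ(X̄,V̄) = L̂(X̄,V̄), and L̂(X̄,V̄) ≤ L̂(U,V̄); (ii) sup_{v ∈ V̄} d(v) = inf_{x ∈ X̄} p(x). -/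
open Set

/-!
Always `sup_{V̄} d = L̂(X, V̄) ≤ L̂(X̄, V̄) ≤ Ľ(X̄, V̄) ≤ Ľ(X̄, V) = inf_{X̄} p`, so (ii) says that this
chain collapses. Condition (i) for `U = X` and `W = V` closes the chain into a cycle; conversely,
once the chain collapses, (i) follows since `L̂` is antitone in `U` and `Ľ` is monotone in `W`.
-/

section CanonicalExtension

variable {L X V : Type*} [CompleteLattice L]

def lowerCanonicalExt (l : X → V → L) (U : Set X) (W : Set V) : L :=
  ⨆ v ∈ W, ⨅ x ∈ U, l x v

def upperCanonicalExt (l : X → V → L) (U : Set X) (W : Set V) : L :=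
  ⨅ x ∈ U, ⨆ v ∈ W, l x v

variable (l : X → V → L)

theorem lowerCanonicalExt_le_upperCanonicalExt (U : Set X) (W : Set V) :
    lowerCanonicalExt l U W ≤ upperCanonicalExt l U W :=
  iSup₂_le fun v hv => le_iInf₂ fun x hx =>
    (iInf₂_le x hx).trans (le_iSup₂_of_le v hv le_rfl)

theorem lowerCanonicalExt_antitone_left (W : Set V) :
    Antitone fun U => lowerCanonicalExt l U W :=
  fun _ _ hUU' => iSup₂_mono fun _ _ => biInf_mono fun _ hx => hUU' hx

theorem upperCanonicalExt_monotone_right (U : Set X) :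
    Monotone fun W => upperCanonicalExt l U W :=
  fun _ _ hWW' => iInf₂_mono fun _ _ => biSup_mono fun _ hv => hWW' hv

theorem lowerCanonicalExt_univ_left (W : Set V) :
    lowerCanonicalExt l univ W = ⨆ v ∈ W, ⨅ x, l x v := by
  simp only [lowerCanonicalExt, iInf_univ]

theorem upperCanonicalExt_univ_right (U : Set X) :
    upperCanonicalExt l U univ = ⨅ x ∈ U, ⨆ v, l x v := by
  simp only [upperCanonicalExt, iSup_univ]

end CanonicalExtension

theorem le_chain_collapse_iff {α : Type*} [PartialOrder α] {a b c d : α}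
    (hab : a ≤ b) (hbc : b ≤ c) (hcd : c ≤ d) :
    (d ≤ c ∧ c = b ∧ b ≤ a) ↔ a = d := by
  constructor
  · rintro ⟨hdc, rfl, hca⟩
    exact le_antisymm (hab.trans hcd) (hdc.trans hca)
  · intro had
    exact ⟨had.ge.trans (hab.trans hbc), le_antisymm (hcd.trans (had.ge.trans hab)) hbc,
      hbc.trans (hcd.trans had.ge)⟩

theorem saddle_condition_iff_infsup_general {L X V : Type*} [CompleteLattice L]
    (l : X → V → L) (Xb : Set X) (Vb : Set V) :
    (∀ (U : Set X) (W : Set V),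
        (⨅ x ∈ Xb, ⨆ v ∈ W, l x v) ≤ (⨅ x ∈ Xb, ⨆ v ∈ Vb, l x v) ∧
        (⨅ x ∈ Xb, ⨆ v ∈ Vb, l x v) = (⨆ v ∈ Vb, ⨅ x ∈ Xb, l x v) ∧
        (⨆ v ∈ Vb, ⨅ x ∈ Xb, l x v) ≤ (⨆ v ∈ Vb, ⨅ x ∈ U, l x v))
      ↔ (⨆ v ∈ Vb, ⨅ x : X, l x v) = (⨅ x ∈ Xb, ⨆ v : V, l x v) := by
  change (∀ U W, upperCanonicalExt l Xb W ≤ upperCanonicalExt l Xb Vb ∧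
      upperCanonicalExt l Xb Vb = lowerCanonicalExt l Xb Vb ∧
      lowerCanonicalExt l Xb Vb ≤ lowerCanonicalExt l U Vb) ↔ _
  rw [← lowerCanonicalExt_univ_left, ← upperCanonicalExt_univ_right]
  have chain := le_chain_collapse_iff
    (lowerCanonicalExt_antitone_left l Vb (subset_univ Xb))
    (lowerCanonicalExt_le_upperCanonicalExt l Xb Vb)
    (upperCanonicalExt_monotone_right l Xb (subset_univ Vb))
  refine ⟨fun h => chain.mp (h univ univ), fun h U W => ?_⟩
  obtain ⟨hdc, hcb, hba⟩ := chain.mpr h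
  exact ⟨(upperCanonicalExt_monotone_right l Xb (subset_univ W)).trans hdc, hcb,
    hba.trans (lowerCanonicalExt_antitone_left l Vb (subset_univ U))⟩

/-- In a complete lattice `L`, for `l : X × V → L` with `p(x) = sup_v l(x,v)`,
`d(v) = inf_x l(x,v)`, lower canonical extension `L̂(U,W) = sup_{v ∈ W} inf_{x ∈ U} l(x,v)`
and upper canonical extension `Ľ(U,W) = inf_{x ∈ U} sup_{v ∈ W} l(x,v)` (with `sup ∅ = ⊥`,
`inf ∅ = ⊤`), the following are equivalent for `X̄ ⊆ X`, `V̄ ⊆ V`: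
(i) for all `U ⊆ X`, `W ⊆ V`: `Ľ(X̄,W) ≤ Ľ(X̄,V̄) = L̂(X̄,V̄) ≤ L̂(U,V̄)`;
(ii) `sup_{v ∈ V̄} d(v) = inf_{x ∈ X̄} p(x)`. -/
theorem saddle_condition_iff_infsup {L X V : Type*} [CompleteLattice L]
    [Nonempty X] [Nonempty V] (l : X → V → L) (Xb : Set X) (Vb : Set V) :
    (∀ (U : Set X) (W : Set V),
        (⨅ x ∈ Xb, ⨆ v ∈ W, l x v) ≤ (⨅ x ∈ Xb, ⨆ v ∈ Vb, l x v) ∧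
        (⨅ x ∈ Xb, ⨆ v ∈ Vb, l x v) = (⨆ v ∈ Vb, ⨅ x ∈ Xb, l x v) ∧
        (⨆ v ∈ Vb, ⨅ x ∈ Xb, l x v) ≤ (⨆ v ∈ Vb, ⨅ x ∈ U, l x v))
      ↔ (⨆ v ∈ Vb, ⨅ x : X, l x v) = (⨅ x ∈ Xb, ⨆ v : V, l x v) :=
  saddle_condition_iff_infsup_general l Xb Vb
end

section
/- Let (L, ≤) be a complete lattice, X and V nonempty sets, l : X × V → L, and let X̄ ⊆ X and V̄ ⊆ V be nonempty subsets. Then the following are equivalent: (a) X̄ is a solution of the problem of minimizing p over X, V̄ is a solution of the problem of maximizing d over V, and strong duality holds, i.e. sup_{v ∈ V} d(v) = inf_{x ∈ X} p(x); (b) (X̄,V̄) is a saddle point of l. The same equivalence holds with 'solution' replaced by 'full solution' in (a) and 'saddle point' replaced by 'full saddle point' in (b). -/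
/-!
Weak duality and the minimax inequality give, for all `X̄`, `V̄`, the chains
`sup_{V̄} d ≤ sup_V d ≤ inf_X p ≤ inf_{X̄} p` and
`sup_{V̄} d ≤ L̂(X̄,V̄) ≤ Ľ(X̄,V̄) ≤ inf_{X̄} p`, with `L̂(X,V̄) = sup_{V̄} d` and
`Ľ(X̄,V) = inf_{X̄} p`. Being an infimizer and a supremizer with strong duality means that
the first chain collapses, the saddle inequalities mean that the second one does, and either
happens exactly when its two ends agree. The conditions on `Min` and `Max` appear verbatim on
both sides.
-/

open Set

noncomputable section

variable {L X V : Type*}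

/-- The set of minimal elements of `A`. -/
def MinSet [PartialOrder L] (A : Set L) : Set L := {a ∈ A | ∀ b ∈ A, b ≤ a → b = a}

/-- The set of maximal elements of `A`. -/
def MaxSet [PartialOrder L] (A : Set L) : Set L := {a ∈ A | ∀ b ∈ A, a ≤ b → b = a}

/-- `p(x) = sup_{v ∈ V} l(x,v)`. -/
def pFun [CompleteLattice L] (l : X → V → L) (x : X) : L := ⨆ v : V, l x v

/-- `d(v) = inf_{x ∈ X} l(x,v)`. -/
def dFun [CompleteLattice L] (l : X → V → L) (v : V) : L := ⨅ x : X, l x v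

/-- Condition (b) of the definition of a saddle point: for all `U ⊆ X`, `W ⊆ V`,
`Ľ(X̄,W) ≤ Ľ(X̄,V̄) = L̂(X̄,V̄) ≤ L̂(U,V̄)`, where `L̂(U,W) = sup_{v ∈ W} inf_{x ∈ U} l(x,v)`
and `Ľ(U,W) = inf_{x ∈ U} sup_{v ∈ W} l(x,v)` (with `sup ∅ = ⊥` and `inf ∅ = ⊤`). -/
def SaddleIneq [CompleteLattice L] (l : X → V → L) (Xb : Set X) (Vb : Set V) : Prop :=
  ∀ (U : Set X) (W : Set V),
    (⨅ x ∈ Xb, ⨆ v ∈ W, l x v) ≤ (⨅ x ∈ Xb, ⨆ v ∈ Vb, l x v) ∧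
    (⨅ x ∈ Xb, ⨆ v ∈ Vb, l x v) = (⨆ v ∈ Vb, ⨅ x ∈ Xb, l x v) ∧
    (⨆ v ∈ Vb, ⨅ x ∈ Xb, l x v) ≤ (⨆ v ∈ Vb, ⨅ x ∈ U, l x v)

/-- `(X̄,V̄)` is a saddle point of `l`: (a) `∅ ≠ p[X̄] ⊆ Min p[X]` and
`∅ ≠ d[V̄] ⊆ Max d[V]`; (b) the saddle inequalities hold. -/
def IsSaddle [CompleteLattice L] (l : X → V → L) (Xb : Set X) (Vb : Set V) : Prop :=
  ((pFun l '' Xb).Nonempty ∧ pFun l '' Xb ⊆ MinSet (Set.range (pFun l)) ∧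
   (dFun l '' Vb).Nonempty ∧ dFun l '' Vb ⊆ MaxSet (Set.range (dFun l))) ∧
  SaddleIneq l Xb Vb

/-- `(X̄,V̄)` is a full saddle point of `l`: as `IsSaddle`, with equalities in (a). -/
def IsFullSaddle [CompleteLattice L] (l : X → V → L) (Xb : Set X) (Vb : Set V) : Prop :=
  ((pFun l '' Xb).Nonempty ∧ pFun l '' Xb = MinSet (Set.range (pFun l)) ∧
   (dFun l '' Vb).Nonempty ∧ dFun l '' Vb = MaxSet (Set.range (dFun l))) ∧
  SaddleIneq l Xb Vb

/-- The lower canonical extension `L̂`. -/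
def lowerExt [CompleteLattice L] (l : X → V → L) (U : Set X) (W : Set V) : L :=
  ⨆ v ∈ W, ⨅ x ∈ U, l x v

/-- The upper canonical extension `Ľ`. -/
def upperExt [CompleteLattice L] (l : X → V → L) (U : Set X) (W : Set V) : L :=
  ⨅ x ∈ U, ⨆ v ∈ W, l x v

section CompleteLattice

variable [CompleteLattice L] (l : X → V → L)

theorem iSup_dFun_le_iInf_pFun : ⨆ v, dFun l v ≤ ⨅ x, pFun l x :=
  iSup_le fun v => le_iInf fun x => (iInf_le (l · v) x).trans (le_iSup (l x) v)

theorem lowerExt_le_upperExt (U : Set X) (W : Set V) : lowerExt l U W ≤ upperExt l U W :=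
  iSup₂_le fun v hv => le_iInf₂ fun x hx =>
    (iInf₂_le x hx).trans (le_iSup₂ (f := fun v _ => l x v) v hv)

theorem upperExt_le_biInf_pFun (U : Set X) (W : Set V) :
    upperExt l U W ≤ ⨅ x ∈ U, pFun l x :=
  iInf₂_mono fun x _ => iSup₂_le_iSup _ (l x)

theorem biSup_dFun_le_lowerExt (U : Set X) (W : Set V) :
    ⨆ v ∈ W, dFun l v ≤ lowerExt l U W :=
  iSup₂_mono fun v _ => iInf_le_iInf₂ _ (l · v)

theorem upperExt_univ (U : Set X) : upperExt l U univ = ⨅ x ∈ U, pFun l x := by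
  simp only [upperExt, pFun, iSup_univ]

theorem lowerExt_univ (W : Set V) : lowerExt l univ W = ⨆ v ∈ W, dFun l v := by
  simp only [lowerExt, dFun, iInf_univ]

theorem saddleIneq_iff (Xb : Set X) (Vb : Set V) :
    SaddleIneq l Xb Vb ↔ ⨅ x ∈ Xb, pFun l x = ⨆ v ∈ Vb, dFun l v := by
  have chain_upper := upperExt_le_biInf_pFun l Xb Vb
  have chain_mid := lowerExt_le_upperExt l Xb Vb
  have chain_lower := biSup_dFun_le_lowerExt l Xb Vb
  constructor
  · intro h
    obtain ⟨h_upper, h_eq, h_lower⟩ := h univ univ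
    refine le_antisymm ?_ (chain_lower.trans (chain_mid.trans chain_upper))
    calc ⨅ x ∈ Xb, pFun l x = upperExt l Xb univ := (upperExt_univ l Xb).symm
      _ ≤ upperExt l Xb Vb := h_upper
      _ = lowerExt l Xb Vb := h_eq
      _ ≤ lowerExt l univ Vb := h_lower
      _ = ⨆ v ∈ Vb, dFun l v := lowerExt_univ l Vb
  · intro h U W
    have h_upper : upperExt l Xb Vb = ⨅ x ∈ Xb, pFun l x :=
      le_antisymm chain_upper (h.trans_le (chain_lower.trans chain_mid))
    have h_lower : lowerExt l Xb Vb = ⨆ v ∈ Vb, dFun l v :=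
      le_antisymm (chain_mid.trans (chain_upper.trans_eq h)) chain_lower
    exact ⟨(upperExt_le_biInf_pFun l Xb W).trans_eq h_upper.symm,
      h_upper.trans (h.trans h_lower.symm),
      h_lower.trans_le (biSup_dFun_le_lowerExt l U Vb)⟩

theorem infimizer_and_supremizer_and_strong_duality_iff (Xb : Set X) (Vb : Set V) :
    ((⨅ x ∈ Xb, pFun l x) = ⨅ x, pFun l x) ∧ ((⨆ v ∈ Vb, dFun l v) = ⨆ v, dFun l v) ∧
        (⨆ v, dFun l v) = ⨅ x, pFun l x ↔
      ⨅ x ∈ Xb, pFun l x = ⨆ v ∈ Vb, dFun l v := by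
  have h_inf : ⨅ x, pFun l x ≤ ⨅ x ∈ Xb, pFun l x := iInf_le_iInf₂ _ _
  have h_sup : ⨆ v ∈ Vb, dFun l v ≤ ⨆ v, dFun l v := iSup₂_le_iSup _ _
  have h_weak := iSup_dFun_le_iInf_pFun l
  constructor
  · rintro ⟨h_primal, h_dual, h_strong⟩
    rw [h_primal, h_dual, h_strong]
  · intro h
    have h_top : ⨅ x ∈ Xb, pFun l x ≤ ⨆ v, dFun l v := h.trans_le h_sup
    exact ⟨le_antisymm (h_top.trans h_weak) h_inf,
      le_antisymm h_sup ((h_weak.trans h_inf).trans h.le),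
      le_antisymm h_weak (h_inf.trans h_top)⟩

end CompleteLattice

theorem solutions_and_strong_duality_iff_saddle_point_general
    [CompleteLattice L]
    (l : X → V → L) (Xb : Set X) (Vb : Set V) (hXb : Xb.Nonempty) (hVb : Vb.Nonempty) :
    ((((⨅ x ∈ Xb, pFun l x) = ⨅ x : X, pFun l x) ∧
        pFun l '' Xb ⊆ MinSet (Set.range (pFun l)) ∧
        ((⨆ v ∈ Vb, dFun l v) = ⨆ v : V, dFun l v) ∧
        dFun l '' Vb ⊆ MaxSet (Set.range (dFun l)) ∧
        (⨆ v : V, dFun l v) = (⨅ x : X, pFun l x))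
      ↔ IsSaddle l Xb Vb) ∧
    ((((⨅ x ∈ Xb, pFun l x) = ⨅ x : X, pFun l x) ∧
        pFun l '' Xb = MinSet (Set.range (pFun l)) ∧
        ((⨆ v ∈ Vb, dFun l v) = ⨆ v : V, dFun l v) ∧
        dFun l '' Vb = MaxSet (Set.range (dFun l)) ∧
        (⨆ v : V, dFun l v) = (⨅ x : X, pFun l x))
      ↔ IsFullSaddle l Xb Vb) := by
  have key := (infimizer_and_supremizer_and_strong_duality_iff l Xb Vb).trans
    (saddleIneq_iff l Xb Vb).symm
  have hp := hXb.image (pFun l)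
  have hd := hVb.image (dFun l)
  constructor <;>
    exact ⟨fun ⟨h_primal, h_min, h_dual, h_max, h_strong⟩ =>
        ⟨⟨hp, h_min, hd, h_max⟩, key.mp ⟨h_primal, h_dual, h_strong⟩⟩,
      fun ⟨⟨_, h_min, _, h_max⟩, h_saddle⟩ =>
        let ⟨h_primal, h_dual, h_strong⟩ := key.mpr h_saddle
        ⟨h_primal, h_min, h_dual, h_max, h_strong⟩⟩

/-- **Solutions plus strong duality ⟺ saddle point.** For nonempty `X̄ ⊆ X`, `V̄ ⊆ V`:
(a) `X̄` is a solution of minimizing `p` (an infimizer consisting of minimizers), `V̄` is a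
solution of maximizing `d` (a supremizer consisting of maximizers), and strong duality
`sup_v d(v) = inf_x p(x)` holds, if and only if (b) `(X̄,V̄)` is a saddle point of `l`.
The same equivalence holds for full solutions and full saddle points. -/
theorem solutions_and_strong_duality_iff_saddle_point
    [CompleteLattice L] [Nonempty X] [Nonempty V]
    (l : X → V → L) (Xb : Set X) (Vb : Set V) (hXb : Xb.Nonempty) (hVb : Vb.Nonempty) :
    ((((⨅ x ∈ Xb, pFun l x) = ⨅ x : X, pFun l x) ∧
        pFun l '' Xb ⊆ MinSet (Set.range (pFun l)) ∧
        ((⨆ v ∈ Vb, dFun l v) = ⨆ v : V, dFun l v) ∧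
        dFun l '' Vb ⊆ MaxSet (Set.range (dFun l)) ∧
        (⨆ v : V, dFun l v) = (⨅ x : X, pFun l x))
      ↔ IsSaddle l Xb Vb) ∧
    ((((⨅ x ∈ Xb, pFun l x) = ⨅ x : X, pFun l x) ∧
        pFun l '' Xb = MinSet (Set.range (pFun l)) ∧
        ((⨆ v ∈ Vb, dFun l v) = ⨆ v : V, dFun l v) ∧
        dFun l '' Vb = MaxSet (Set.range (dFun l)) ∧
        (⨆ v : V, dFun l v) = (⨅ x : X, pFun l x))
      ↔ IsFullSaddle l Xb Vb) :=
  solutions_and_strong_duality_iff_saddle_point_general l Xb Vb hXb hVb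
end
end
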